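/- Let Δ ⊂ ℝ be compact and suppose α ↦ A(α) = Iₙ - αW with A(α) invertible and ‖A(α)⁻¹‖ (maximum row-sum norm) uniformly bounded on Δ by a constant independent of n, and the row sums of W uniformly bounded. Then for any α₁, α₂ ∈ Δ, |log|det A(α₂)| - log|det A(α₁)|| ≤ C·n·|α₂ - α₁| for a constant C independent of n; i.e., (1/n)(log|det A(α₂)| - log|det A(α₁)|) = O(1) uniformly on Δ. -/

import Mathlib

open Matrix Finset

/-!
By Jacobi's formula, `d/dα log |det (1 - α W)| = -tr ((1 - α W)⁻¹ W)`. Bounding each entry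
`|W j i|` by the row sum `CW` and then summing the rows of `(1 - α W)⁻¹` bounds this derivative
by `CW · CA · n` on `Δ`, and the mean value inequality on the convex set `Δ` concludes.
-/

section DerivDet

variable {𝕜 : Type*} [NontriviallyNormedField 𝕜] {ι : Type*} [Fintype ι] [DecidableEq ι]

theorem Matrix.hasDerivAt_det_one_add_smul (M : Matrix ι ι 𝕜) :
    HasDerivAt (fun t : 𝕜 => det (1 + t • M)) M.trace 0 := by
  set p := (det (1 + (Polynomial.X : Polynomial 𝕜) • M.map Polynomial.C)).divX.divX
  have hlin : HasDerivAt (fun t : 𝕜 => 1 + M.trace * t) M.trace 0 := by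
    simpa using ((hasDerivAt_id (0 : 𝕜)).const_mul M.trace).const_add 1
  have hquad : HasDerivAt (fun t : 𝕜 => p.eval t * t ^ 2) 0 0 := by
    simpa [Pi.mul_def] using (p.hasDerivAt 0).mul (hasDerivAt_pow 2 (0 : 𝕜))
  have hexpand : (fun t : 𝕜 => det (1 + t • M)) = fun t => 1 + M.trace * t + p.eval t * t ^ 2 :=
    funext fun t => det_one_add_smul t M
  rw [hexpand]
  simpa only [Pi.add_def, add_zero] using hlin.add hquad

theorem Matrix.hasDerivAt_det_add_smul {A : Matrix ι ι 𝕜} (hA : IsUnit A.det)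
    (B : Matrix ι ι 𝕜) :
    HasDerivAt (fun t : 𝕜 => det (A + t • B)) (A.det * trace (A⁻¹ * B)) 0 := by
  have hfactor : ∀ t : 𝕜, A + t • B = A * (1 + t • (A⁻¹ * B)) := fun t => by
    rw [mul_add, mul_one, Matrix.mul_smul, ← Matrix.mul_assoc, mul_nonsing_inv A hA,
      Matrix.one_mul]
  simpa only [hfactor, det_mul] using (hasDerivAt_det_one_add_smul (A⁻¹ * B)).const_mul A.det

theorem Matrix.hasDerivAt_log_det_one_sub_smul (W : Matrix ι ι ℝ) {α₀ : ℝ}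
    (hA : IsUnit (1 - α₀ • W).det) :
    HasDerivAt (fun α : ℝ => Real.log (1 - α • W).det) (-trace ((1 - α₀ • W)⁻¹ * W)) α₀ := by
  have hshift : ∀ α : ℝ, 1 - α • W = (1 - α₀ • W) + (α - α₀) • (-W) := fun α => by module
  have hdet : HasDerivAt (fun α : ℝ => (1 - α • W).det)
      ((1 - α₀ • W).det * trace ((1 - α₀ • W)⁻¹ * -W)) α₀ := by
    have := HasDerivAt.comp_sub_const α₀ α₀
      (by simpa only [sub_self] using hasDerivAt_det_add_smul hA (-W))
    simpa only [← hshift, sub_self] using this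
  convert (hdet.log hA.ne_zero) using 1
  rw [mul_div_cancel_left₀ _ hA.ne_zero, Matrix.mul_neg, trace_neg]

end DerivDet

theorem Matrix.abs_trace_mul_le {ι : Type*} [Fintype ι] {B W : Matrix ι ι ℝ} {CB CW : ℝ}
    (hB : ∀ i, ∑ j, |B i j| ≤ CB) (hW : ∀ i, ∑ j, |W i j| ≤ CW) :
    |trace (B * W)| ≤ CB * CW * Fintype.card ι := by
  have hentry : ∀ i j, |W j i| ≤ CW := fun i j =>
    (single_le_sum (f := fun k => |W j k|) (fun k _ => abs_nonneg _) (mem_univ i)).trans (hW j)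
  calc |trace (B * W)| = |∑ i, ∑ j, B i j * W j i| := by simp only [trace, diag, mul_apply]
    _ ≤ ∑ i, ∑ j, |B i j| * |W j i| := by
        refine (abs_sum_le_sum_abs _ _).trans (sum_le_sum fun i _ => ?_)
        simpa only [abs_mul] using abs_sum_le_sum_abs (fun j => B i j * W j i) univ
    _ ≤ ∑ i, (∑ j, |B i j|) * CW := by
        refine sum_le_sum fun i _ => ?_
        rw [sum_mul]
        exact sum_le_sum fun j _ => mul_le_mul_of_nonneg_left (hentry i j) (abs_nonneg _)
    _ ≤ ∑ _i : ι, CB * CW := by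
        refine sum_le_sum fun i _ => ?_
        exact mul_le_mul_of_nonneg_right (hB i) ((abs_nonneg _).trans (hentry i i))
    _ = CB * CW * Fintype.card ι := by rw [sum_const, card_univ, nsmul_eq_mul, mul_comm]

theorem logdet_lipschitz_on_compact_general {n : ℕ} (W : Matrix (Fin n) (Fin n) ℝ)
    (Δ : Set ℝ) (hΔconv : Convex ℝ Δ)
    (CW CA : ℝ)
    (hWrow : ∀ i, ∑ j : Fin n, |W i j| ≤ CW)
    (hinv : ∀ α ∈ Δ, IsUnit (1 - α • W).det)
    (hArow : ∀ α ∈ Δ, ∀ i, ∑ j : Fin n, |(1 - α • W)⁻¹ i j| ≤ CA) :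
    ∀ α₁ ∈ Δ, ∀ α₂ ∈ Δ,
      |Real.log (abs (1 - α₂ • W).det) - Real.log (abs (1 - α₁ • W).det)|
        ≤ CW * CA * n * |α₂ - α₁| := by
  intro α₁ hα₁ α₂ hα₂
  have hderiv : ∀ α ∈ Δ, HasDerivWithinAt (fun α : ℝ => Real.log (1 - α • W).det)
      (-trace ((1 - α • W)⁻¹ * W)) Δ α := fun α hα =>
    (hasDerivAt_log_det_one_sub_smul W (hinv α hα)).hasDerivWithinAt
  have hbound : ∀ α ∈ Δ, ‖-trace ((1 - α • W)⁻¹ * W)‖ ≤ CW * CA * n := fun α hα => by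
    rw [norm_neg, Real.norm_eq_abs, mul_comm CW]
    simpa using abs_trace_mul_le (hArow α hα) hWrow
  simpa only [Real.log_abs, Real.norm_eq_abs] using
    hΔconv.norm_image_sub_le_of_norm_hasDerivWithin_le hderiv hbound hα₁ hα₂

/-- If `Δ ⊂ ℝ` is compact (and convex), the row sums of `W` are bounded by `C_W`, and
for each `α ∈ Δ` the matrix `A(α) = Iₙ - αW` is invertible with the row sums of
`A(α)⁻¹` bounded by `C_A`, then
`|log|det A(α₂)| - log|det A(α₁)|| ≤ C_W C_A · n · |α₂ - α₁|` for all `α₁, α₂ ∈ Δ`;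
in particular `(1/n)(log|det A(α₂)| - log|det A(α₁)|) = O(1)` uniformly on `Δ`. -/
theorem logdet_lipschitz_on_compact {n : ℕ} (W : Matrix (Fin n) (Fin n) ℝ)
    (Δ : Set ℝ) (hΔc : IsCompact Δ) (hΔconv : Convex ℝ Δ)
    (CW CA : ℝ)
    (hWrow : ∀ i, ∑ j : Fin n, |W i j| ≤ CW)
    (hinv : ∀ α ∈ Δ, IsUnit (1 - α • W).det)
    (hArow : ∀ α ∈ Δ, ∀ i, ∑ j : Fin n, |(1 - α • W)⁻¹ i j| ≤ CA) :
    ∀ α₁ ∈ Δ, ∀ α₂ ∈ Δ,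
      |Real.log (abs (1 - α₂ • W).det) - Real.log (abs (1 - α₁ • W).det)|
        ≤ CW * CA * n * |α₂ - α₁| :=
  logdet_lipschitz_on_compact_general W Δ hΔconv CW CA hWrow hinv hArow
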